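/- arXiv:1408.0173 — 2 statements merged into one kernel-verified Lean document; each statement's English description precedes it below -/
import Mathlib

section
/- Let D : ℝⁿ → ℝ be convex differentiable, R(d) = α‖Kd‖_{2,1} with K linear and α > 0. If the linearized ADMM iterates satisfy K d^{k+1} - g^{k+1} → 0, d^{k+1} - d^k → 0, g^{k+1} - g^k → 0, and b^{k+1} - b^k → 0, and the optimality conditions 0 = λ Kᵀ(K d^{k+1} - g^k + b^k) + d^{k+1} - d^k + τ ∇D(d^k) and λ(K d^{k+1} - g^{k+1} + b^k) ∈ ατ ∂‖g^{k+1}‖_{2,1} hold at each iteration, then any accumulation point d* of (d^k) satisfies the first-order optimality condition 0 ∈ ∇D(d*) + (α/1) Kᵀ ∂‖·‖_{2,1}(K d*) (i.e. d* is a critical point of D + α‖K·‖_{2,1}), provided ∇D is continuous and b^k converges. -/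
open scoped RealInnerProductSpace
open Filter

/-- The convex subdifferential of `f` at `x`. -/
def subdiff {F : Type*} [NormedAddCommGroup F] [InnerProductSpace ℝ F]
    (f : F → ℝ) (x : F) : Set F :=
  {p | ∀ y, f x + ⟪p, y - x⟫ ≤ f y}

/-- If the linearized ADMM residuals vanish, any accumulation point of the primal
iterates is a critical point of `d ↦ D(d) + α‖Kd‖_{2,1}`. -/
theorem stmt_8 {n N : ℕ} (D : EuclideanSpace ℝ (Fin n) → ℝ)
    (gradD : EuclideanSpace ℝ (Fin n) → EuclideanSpace ℝ (Fin n))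
    (hconvD : ConvexOn ℝ Set.univ D)
    (hgrad : ∀ x, HasGradientAt D (gradD x) x)
    (hgradCont : Continuous gradD)
    (K : EuclideanSpace ℝ (Fin n) →ₗ[ℝ] (EuclideanSpace ℝ (Fin N × Fin 2)))
    (nrm : EuclideanSpace ℝ (Fin N × Fin 2) → ℝ)
    (hnrm : ∀ g, nrm g = ∑ i : Fin N, Real.sqrt (∑ j : Fin 2, (g (i, j))^2))
    (α lam τ : ℝ) (hα : 0 < α) (hlam : 0 < lam) (hτ : 0 < τ)
    (d : ℕ → EuclideanSpace ℝ (Fin n))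
    (g b : ℕ → EuclideanSpace ℝ (Fin N × Fin 2))
    -- vanishing residuals
    (hres1 : Tendsto (fun k => K (d (k+1)) - g (k+1)) atTop (nhds 0))
    (hres2 : Tendsto (fun k => d (k+1) - d k) atTop (nhds 0))
    (hres3 : Tendsto (fun k => g (k+1) - g k) atTop (nhds 0))
    (hres4 : Tendsto (fun k => b (k+1) - b k) atTop (nhds 0))
    (hbconv : ∃ binf, Tendsto b atTop (nhds binf))
    -- optimality conditions of the linearized ADMM iterations
    (hopt1 : ∀ k, (0 : EuclideanSpace ℝ (Fin n)) =
        lam • K.adjoint (K (d (k+1)) - g k + b k) + (d (k+1) - d k) + τ • gradD (d k))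
    (hopt2 : ∀ k, lam • (K (d (k+1)) - g (k+1) + b k) ∈
        (fun q => (α * τ) • q) '' subdiff nrm (g (k+1)))
    -- accumulation point
    (dstar : EuclideanSpace ℝ (Fin n))
    (φ : ℕ → ℕ) (hφ : StrictMono φ)
    (hacc : Tendsto (fun k => d (φ k)) atTop (nhds dstar)) :
    ∃ q ∈ subdiff nrm (K dstar), gradD dstar + α • K.adjoint q = 0 := by

  obtain ⟨binf, hb⟩ := hbconv
  have hατ : (α * τ) ≠ 0 := by positivity
  set q : ℕ → EuclideanSpace ℝ (Fin N × Fin 2) :=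
    fun k => (α*τ)⁻¹ • (lam • (K (d (φ k + 1)) - g (φ k + 1) + b (φ k))) with hqdef
  have hqmem : ∀ k, q k ∈ subdiff nrm (g (φ k + 1)) := by
    intro k
    obtain ⟨p, hp, hpe⟩ := hopt2 (φ k)
    have : q k = p := by
      rw [hqdef]; simp only [← hpe, smul_smul, inv_mul_cancel₀ hατ, one_smul]
    rw [this]; exact hp
  have hqsmul : ∀ k, (α*τ) • q k = lam • (K (d (φ k + 1)) - g (φ k + 1) + b (φ k)) := by
    intro k
    rw [hqdef]
    simp only [smul_smul]
    congr 1
    field_simp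
  have hφt := hφ.tendsto_atTop
  have hA : Tendsto (fun k => d (φ k + 1) - d (φ k)) atTop (nhds 0) := hres2.comp hφt
  have hd1 : Tendsto (fun k => d (φ k + 1)) atTop (nhds dstar) := by
    have := hacc.add hA
    simpa using this
  have hKcont : Continuous K := K.continuous_of_finiteDimensional
  have hKd1 : Tendsto (fun k => K (d (φ k + 1))) atTop (nhds (K dstar)) :=
    (hKcont.tendsto _).comp hd1
  have hC : Tendsto (fun k => K (d (φ k + 1)) - g (φ k + 1)) atTop (nhds 0) := hres1.comp hφt
  have hg1 : Tendsto (fun k => g (φ k + 1)) atTop (nhds (K dstar)) := by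
    have := hKd1.sub hC
    simpa using this
  have hbφ : Tendsto (fun k => b (φ k)) atTop (nhds binf) := hb.comp hφt
  set qlim := (α*τ)⁻¹ • (lam • binf) with hql
  have hqlim : Tendsto q atTop (nhds qlim) := by
    have h1 : Tendsto (fun k => K (d (φ k + 1)) - g (φ k + 1) + b (φ k)) atTop
        (nhds (0 + binf)) := hC.add hbφ
    rw [zero_add] at h1
    exact (h1.const_smul lam).const_smul _
  have hnrmCont : Continuous nrm := by
    have he : nrm = fun g : EuclideanSpace ℝ (Fin N × Fin 2) =>
        ∑ i : Fin N, Real.sqrt (∑ j : Fin 2, (g (i, j))^2) := funext hnrm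
    rw [he]
    exact continuous_finset_sum _ fun i _ => Real.continuous_sqrt.comp
      (continuous_finset_sum _ fun j _ => ((EuclideanSpace.proj ((i, j) : Fin N × Fin 2)).continuous).pow 2)
  have hmem : qlim ∈ subdiff nrm (K dstar) := by
    intro y
    have hk : ∀ k, nrm (g (φ k + 1)) + ⟪q k, y - g (φ k + 1)⟫ ≤ nrm y := fun k => hqmem k y
    have hlim : Tendsto (fun k => nrm (g (φ k + 1)) + ⟪q k, y - g (φ k + 1)⟫) atTop
        (nhds (nrm (K dstar) + ⟪qlim, y - K dstar⟫)) :=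
      ((hnrmCont.tendsto _).comp hg1).add (hqlim.inner (tendsto_const_nhds.sub hg1))
    exact le_of_tendsto hlim (Eventually.of_forall hk)
  have hadjCont : Continuous (K.adjoint) := LinearMap.continuous_of_finiteDimensional _
  set S : ℕ → EuclideanSpace ℝ (Fin n) := fun k =>
    K.adjoint ((α*τ) • q k) + lam • K.adjoint (g (φ k + 1) - g (φ k)) +
      (d (φ k + 1) - d (φ k)) + τ • gradD (d (φ k)) with hS
  have hS0 : ∀ k, S k = 0 := by
    intro k
    have h1 := hopt1 (φ k)
    rw [hS]
    simp only [hqsmul k, ← map_smul, ← map_add]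
    have h2 : lam • (K (d (φ k + 1)) - g (φ k + 1) + b (φ k)) + lam • (g (φ k + 1) - g (φ k))
        = lam • (K (d (φ k + 1)) - g (φ k) + b (φ k)) := by module
    rw [h2, map_smul]
    exact h1.symm
  have hG : Tendsto (fun k => g (φ k + 1) - g (φ k)) atTop (nhds 0) := hres3.comp hφt
  have hgd : Tendsto (fun k => gradD (d (φ k))) atTop (nhds (gradD dstar)) :=
    (hgradCont.tendsto _).comp hacc
  have hSlim : Tendsto S atTop
      (nhds (K.adjoint ((α*τ) • qlim) + lam • K.adjoint 0 + 0 + τ • gradD dstar)) := by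
    refine (((Tendsto.add ?_ ?_).add hA).add (hgd.const_smul τ))
    · exact (hadjCont.tendsto _).comp (hqlim.const_smul _)
    · exact ((hadjCont.tendsto _).comp hG).const_smul lam
  have hzero : K.adjoint ((α*τ) • qlim) + lam • K.adjoint 0 + 0 + τ • gradD dstar = 0 := by
    refine tendsto_nhds_unique hSlim ?_
    have hSe : S = fun _ => (0 : EuclideanSpace ℝ (Fin n)) := funext hS0
    rw [hSe]
    exact tendsto_const_nhds
  refine ⟨qlim, hmem, ?_⟩
  simp only [map_zero, smul_zero, add_zero] at hzero
  rw [map_smul] at hzero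
  have hkey : τ • (gradD dstar + α • K.adjoint qlim) = 0 := by
    calc τ • (gradD dstar + α • K.adjoint qlim)
        = (α*τ) • K.adjoint qlim + τ • gradD dstar := by module
      _ = 0 := hzero
  exact (smul_eq_zero.mp hkey).resolve_left hτ.ne'
end

section
/- Under the assumptions of Theorem 1 (D, R convex, S_D(d,v) ≤ (1/(2τ))‖d−v‖²), the per-iteration quantities of the linearized ADMM satisfy the single-step descent inequality: (λ/2)(‖g_e^{k+1}‖² + ‖b_e^{k+1}‖²) + (1/2)‖d_e^{k+1}‖² + τ(D(d^{k+1}) − D(d̂) − ⟨∇D(d̂), d^{k+1} − d̂⟩) ≤ (λ/2)(‖g_e^k‖² + ‖b_e^k‖²) + (1/2)‖d_e^k‖² + τ(D(d^k) − D(d̂) − ⟨∇D(d̂), d^k − d̂⟩) − (λ/2)‖K d_e^{k+1} − g_e^k‖² − τ S_D(d^k, d̂) − ατ S_R(g^{k+1}, ĝ). -/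
/-!
Pair the first-order optimality condition of the `d`-update, minus the stationarity condition
of the saddle point, with `d^{k+1} - d̂`. Polarization turns every inner product into differences
of squared norms, and the multiplier update turns `λ ⟪g_e^{k+1}, b_e^{k+1}⟫` into the symmetric
Bregman distance of `R`. What is left is the linearization error of `D` along the step
`d^{k+1} - d^k`, which convexity and `S_D(d, v) ≤ ‖d - v‖² / (2τ)` bound by
`½ ‖d^{k+1} - d^k‖²`, exactly the amount the polarization provides.
-/

open scoped RealInnerProductSpace

section InnerProductSpace

variable {F : Type*} [NormedAddCommGroup F] [InnerProductSpace ℝ F]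

theorem ConvexOn.add_inner_le_of_hasGradientAt [CompleteSpace F] {f : F → ℝ}
    (hf : ConvexOn ℝ Set.univ f) {x g : F} (hg : HasGradientAt f g x) (y : F) :
    f x + ⟪g, y - x⟫ ≤ f y := by
  have hline : ConvexOn ℝ Set.univ (f ∘ AffineMap.lineMap (k := ℝ) x y) :=
    hf.comp_affineMap _
  have hg₀ : HasFDerivAt f (InnerProductSpace.toDual ℝ F g)
      (AffineMap.lineMap (k := ℝ) x y 0) := by
    simpa using hg.hasFDerivAt
  have hderiv : HasDerivAt (f ∘ AffineMap.lineMap (k := ℝ) x y) ⟪g, y - x⟫ 0 := by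
    simpa using hg₀.comp_hasDerivAt (0 : ℝ) AffineMap.hasDerivAt_lineMap
  simpa [slope_def_field, le_sub_iff_add_le'] using
    hline.le_slope_of_hasDerivAt (Set.mem_univ 0) (Set.mem_univ 1) zero_lt_one hderiv

theorem ConvexOn.sub_le_inner_add_of_inner_sub_le [CompleteSpace F] {f : F → ℝ}
    (hf : ConvexOn ℝ Set.univ f) {x y gx gy : F} (hgx : HasGradientAt f gx x) {c : ℝ}
    (hc : ⟪x - y, gx - gy⟫ ≤ c * ‖x - y‖ ^ 2) :
    f x - f y ≤ ⟪gy, x - y⟫ + c * ‖x - y‖ ^ 2 := by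
  have hconv := hf.add_inner_le_of_hasGradientAt hgx y
  rw [← neg_sub, inner_neg_right] at hconv
  rw [inner_sub_right, real_inner_comm gx, real_inner_comm gy] at hc
  linarith

theorem real_inner_sub_self (a b : F) :
    ⟪a - b, a⟫ = (‖a‖ ^ 2 - ‖b‖ ^ 2 + ‖a - b‖ ^ 2) / 2 := by
  rw [norm_sub_sq_real, inner_sub_left, real_inner_self_eq_norm_sq, real_inner_comm]
  ring

/-- The energy identity of one splitting step in error variables: `w = K d_e^{k+1}`,
`e₀, e₁ = g_e^k, g_e^{k+1}` and `f₀, f₁ = b_e^k, b_e^{k+1}`. -/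
theorem real_inner_splitting_step {e₀ e₁ f₀ f₁ w : F} (hf : f₁ = f₀ + w - e₁) :
    ⟪w - e₀ + f₀, w⟫ = (‖e₁‖ ^ 2 - ‖e₀‖ ^ 2 + ‖f₁‖ ^ 2 - ‖f₀‖ ^ 2 + ‖w - e₀‖ ^ 2) / 2
      + ⟪e₁, f₁⟫ := by
  subst hf
  simp only [← real_inner_self_eq_norm_sq, inner_sub_left, inner_sub_right,
    inner_add_left, inner_add_right]
  linarith [real_inner_comm e₀ w, real_inner_comm e₁ w, real_inner_comm f₀ w,
    real_inner_comm e₁ f₀, real_inner_comm e₀ f₀, real_inner_comm e₀ e₁]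

end InnerProductSpace

theorem linearizedADMM_multiplier_error {𝕜 F : Type*} [Field 𝕜] [AddCommGroup F] [Module 𝕜 F]
    {lam c : 𝕜} (hlam : lam ≠ 0) {r b₀ b₁ q₁ bh qh : F}
    (hopt : lam • (r + b₀) = c • q₁) (hb : b₁ = b₀ + r) (hbh : bh = (c / lam) • qh) :
    lam • (b₁ - bh) = c • (q₁ - qh) := by
  rw [hb, hbh, smul_sub, smul_smul, mul_div_cancel₀ _ hlam, smul_sub, ← hopt, add_comm b₀]

section LinearizedADMM

variable {E F : Type*} [NormedAddCommGroup E] [InnerProductSpace ℝ E] [FiniteDimensional ℝ E]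
  [NormedAddCommGroup F] [InnerProductSpace ℝ F] [FiniteDimensional ℝ F]

theorem linearizedADMM_inner_error_eq_zero {K : E →ₗ[ℝ] F} {lam τ : ℝ} {gradD : E → E}
    {d₀ d₁ dh : E} {g₀ b₀ gh bh : F}
    (hopt : 0 = lam • K.adjoint (K d₁ - g₀ + b₀) + (d₁ - d₀) + τ • gradD d₀)
    (hgh : gh = K dh) (hstat : τ • gradD dh + lam • K.adjoint bh = 0) :
    lam * ⟪K (d₁ - dh) - (g₀ - gh) + (b₀ - bh), K (d₁ - dh)⟫ + ⟪d₁ - d₀, d₁ - dh⟫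
      + τ * ⟪gradD d₀ - gradD dh, d₁ - dh⟫ = 0 := by
  have herr : lam • K.adjoint (K (d₁ - dh) - (g₀ - gh) + (b₀ - bh)) + (d₁ - d₀)
      + τ • (gradD d₀ - gradD dh) = 0 := by
    rw [show K (d₁ - dh) - (g₀ - gh) + (b₀ - bh) = (K d₁ - g₀ + b₀) - bh by
      rw [map_sub, hgh]; abel, map_sub]
    linear_combination (norm := module) -hopt - hstat
  have h := congrArg (⟪·, d₁ - dh⟫) herr
  rwa [inner_add_left, inner_add_left, real_inner_smul_left, real_inner_smul_left,
    LinearMap.adjoint_inner_left, inner_zero_left] at h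

end LinearizedADMM

theorem stmt_10_general {n m : ℕ} (D : EuclideanSpace ℝ (Fin n) → ℝ)
    (gradD : EuclideanSpace ℝ (Fin n) → EuclideanSpace ℝ (Fin n))
    (hconvD : ConvexOn ℝ Set.univ D)
    (hgrad : ∀ x, HasGradientAt D (gradD x) x)
    (K : EuclideanSpace ℝ (Fin n) →ₗ[ℝ] EuclideanSpace ℝ (Fin m))
    (α lam τ : ℝ) (hlam : 0 < lam) (hτ : 0 < τ)
    (hSD : ∀ d v, ⟪d - v, gradD d - gradD v⟫ ≤ (1 / (2 * τ)) * ‖d - v‖^2)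
    -- one step of the linearized ADMM: iterates and optimality conditions
    (d0 d1 : EuclideanSpace ℝ (Fin n)) (g0 g1 b0 b1 q1 : EuclideanSpace ℝ (Fin m))
    (hopt1 : (0 : EuclideanSpace ℝ (Fin n)) =
        lam • K.adjoint (K d1 - g0 + b0) + (d1 - d0) + τ • gradD d0)
    (hopt2 : lam • (K d1 - g1 + b0) = (α * τ) • q1)
    (hbup : b1 = b0 + (K d1 - g1))
    -- saddle point (d̂, ĝ, b̂) with K d̂ = ĝ, b̂ = (ατ/λ) q̂, q̂ ∈ ∂R(ĝ),
    -- and stationarity τ∇D(d̂) + λ Kᵀ b̂ = 0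
    (dh : EuclideanSpace ℝ (Fin n)) (gh bh qh : EuclideanSpace ℝ (Fin m))
    (hgh : gh = K dh) (hbh : bh = (α * τ / lam) • qh)
    (hstat : τ • gradD dh + lam • K.adjoint bh = 0) :
    lam / 2 * (‖g1 - gh‖^2 + ‖b1 - bh‖^2) + 1 / 2 * ‖d1 - dh‖^2
        + τ * (D d1 - D dh - ⟪gradD dh, d1 - dh⟫) ≤
      lam / 2 * (‖g0 - gh‖^2 + ‖b0 - bh‖^2) + 1 / 2 * ‖d0 - dh‖^2
        + τ * (D d0 - D dh - ⟪gradD dh, d0 - dh⟫)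
        - lam / 2 * ‖K (d1 - dh) - (g0 - gh)‖^2
        - τ * ⟪d0 - dh, gradD d0 - gradD dh⟫
        - α * τ * ⟪g1 - gh, q1 - qh⟫ := by
  have hpair := linearizedADMM_inner_error_eq_zero hopt1 hgh hstat
  have hsplit := real_inner_splitting_step (e₀ := g0 - gh) (e₁ := g1 - gh) (f₀ := b0 - bh)
    (f₁ := b1 - bh) (w := K (d1 - dh)) (by rw [hbup, map_sub, ← hgh]; abel)
  have hpolar := real_inner_sub_self (d1 - dh) (d0 - dh)
  rw [sub_sub_sub_cancel_right] at hpolar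
  have hmult : lam * ⟪g1 - gh, b1 - bh⟫ = α * τ * ⟪g1 - gh, q1 - qh⟫ := by
    rw [← real_inner_smul_right, linearizedADMM_multiplier_error hlam.ne' hopt2 hbup hbh,
      real_inner_smul_right]
  have hdescent : τ * (D d1 - D d0) ≤ τ * ⟪gradD d0, d1 - d0⟫ + ‖d1 - d0‖ ^ 2 / 2 := by
    have h := mul_le_mul_of_nonneg_left
      (hconvD.sub_le_inner_add_of_inner_sub_le (hgrad d1) (hSD d1 d0)) hτ.le
    rw [mul_add, ← mul_assoc, show τ * (1 / (2 * τ)) = 1 / 2 by field_simp] at h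
    linarith
  have hgrad_split : ⟪gradD d0 - gradD dh, d1 - dh⟫ = ⟪gradD d0, d1 - d0⟫
      - ⟪gradD dh, d1 - dh⟫ + ⟪gradD dh, d0 - dh⟫ + ⟪d0 - dh, gradD d0 - gradD dh⟫ := by
    rw [real_inner_comm (gradD d0 - gradD dh)]
    simp only [inner_sub_left, inner_sub_right]
    ring
  linear_combination hdescent - lam * hsplit - hpolar - τ * hgrad_split + hpair - hmult

/-- Single-step descent (Lyapunov) inequality for the linearized ADMM under the
assumptions of Theorem 1. -/
theorem stmt_10 {n m : ℕ} (D : EuclideanSpace ℝ (Fin n) → ℝ)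
    (gradD : EuclideanSpace ℝ (Fin n) → EuclideanSpace ℝ (Fin n))
    (hconvD : ConvexOn ℝ Set.univ D)
    (hgrad : ∀ x, HasGradientAt D (gradD x) x)
    (R : EuclideanSpace ℝ (Fin m) → ℝ) (hconvR : ConvexOn ℝ Set.univ R)
    (K : EuclideanSpace ℝ (Fin n) →ₗ[ℝ] EuclideanSpace ℝ (Fin m))
    (α lam τ : ℝ) (hα : 0 < α) (hlam : 0 < lam) (hτ : 0 < τ)
    (hSD : ∀ d v, ⟪d - v, gradD d - gradD v⟫ ≤ (1 / (2 * τ)) * ‖d - v‖^2)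
    -- one step of the linearized ADMM: iterates and optimality conditions
    (d0 d1 : EuclideanSpace ℝ (Fin n)) (g0 g1 b0 b1 q1 : EuclideanSpace ℝ (Fin m))
    (hopt1 : (0 : EuclideanSpace ℝ (Fin n)) =
        lam • K.adjoint (K d1 - g0 + b0) + (d1 - d0) + τ • gradD d0)
    (hq1 : q1 ∈ subdiff R g1)
    (hopt2 : lam • (K d1 - g1 + b0) = (α * τ) • q1)
    (hbup : b1 = b0 + (K d1 - g1))
    -- saddle point (d̂, ĝ, b̂) with K d̂ = ĝ, b̂ = (ατ/λ) q̂, q̂ ∈ ∂R(ĝ),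
    -- and stationarity τ∇D(d̂) + λ Kᵀ b̂ = 0
    (dh : EuclideanSpace ℝ (Fin n)) (gh bh qh : EuclideanSpace ℝ (Fin m))
    (hgh : gh = K dh) (hqh : qh ∈ subdiff R gh) (hbh : bh = (α * τ / lam) • qh)
    (hstat : τ • gradD dh + lam • K.adjoint bh = 0) :
    lam / 2 * (‖g1 - gh‖^2 + ‖b1 - bh‖^2) + 1 / 2 * ‖d1 - dh‖^2
        + τ * (D d1 - D dh - ⟪gradD dh, d1 - dh⟫) ≤
      lam / 2 * (‖g0 - gh‖^2 + ‖b0 - bh‖^2) + 1 / 2 * ‖d0 - dh‖^2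
        + τ * (D d0 - D dh - ⟪gradD dh, d0 - dh⟫)
        - lam / 2 * ‖K (d1 - dh) - (g0 - gh)‖^2
        - τ * ⟪d0 - dh, gradD d0 - gradD dh⟫
        - α * τ * ⟪g1 - gh, q1 - qh⟫ :=
  stmt_10_general D gradD hconvD hgrad K α lam τ hlam hτ hSD d0 d1 g0 g1 b0 b1 q1 hopt1 hopt2 hbup
    dh gh bh qh hgh hbh hstat
end
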